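/- Let M = (W,R) be a Kripke frame and s ∈ W. If M, ∅, s ⊨ Inf, then W is infinite. -/
import Mathlib


/-- Formulas of the memory logic B(⟨r⟩,k):  F ::= k | ¬F | F ∧ F | ◇F. -/
inductive MForm : Type
  | known : MForm
  | neg : MForm → MForm
  | conj : MForm → MForm → MForm
  | dia : MForm → MForm
deriving DecidableEq

namespace MForm

def disj (φ ψ : MForm) : MForm := neg (conj (neg φ) (neg ψ))
def impl (φ ψ : MForm) : MForm := neg (conj φ (neg ψ))
def box (φ : MForm) : MForm := neg (dia (neg φ))
def bot : MForm := conj known (neg known)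
def top : MForm := disj known (neg known)

end MForm

/-- Satisfaction for B(⟨r⟩,k) on a Kripke frame (W, R), at state `w`, with memory `S`.
`◇` is the remember-and-move operator: the current state is added to the memory. -/
def MSat {W : Type*} (R : W → W → Prop) : Set W → W → MForm → Prop
  | S, w, .known => w ∈ S
  | S, w, .neg φ => ¬ MSat R S w φ
  | S, w, .conj φ ψ => MSat R S w φ ∧ MSat R S w ψ
  | S, w, .dia φ => ∃ t, R w t ∧ MSat R (S ∪ {w}) t φ

/-- A formula is satisfiable iff it holds at some state of some frame with empty initial memory. -/
def MSatisfiable (φ : MForm) : Prop :=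
  ∃ (W : Type) (R : W → W → Prop) (s : W), MSat R ∅ s φ

namespace MForm

/-- The macro s ≡ ◇□⊥ : "the current state sees a dead end". -/
def sees : MForm := dia (box bot)

/-- a-or-b ≡ k ∧ ◇(k ∧ ¬s). -/
def aorb : MForm := conj known (dia (conj known (neg sees)))

/-- c ≡ k ∧ □(k → s). -/
def cmac : MForm := conj known (box (impl known sees))

/-- The formula `Inf`, the conjunction of the seven conjuncts (1)–(7). -/
def infF : MForm :=
  conj sees <|                                                              -- (1) s
  conj (box (neg sees)) <|                                                  -- (2) □¬s
  conj (box (box (impl known sees))) <|                                     -- (3) □□(k → s)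
  conj (dia (dia known)) <|                                                 -- (4) ◇◇k
  conj (box (impl (dia top) (dia (conj (neg known) (neg sees))))) <|        -- (5)
  conj (box (box (impl (neg sees)
        (dia (conj known (conj sees (dia (conj known (box (impl known sees)))))))))) <|  -- (6)
  box (box (impl (neg sees) (box (impl (neg sees)
        (dia (conj known (conj sees (box (impl aorb (dia cmac))))))))))     -- (7)

end MForm

/-- A state `x` "sees a dead end": some successor of `x` has no successor. -/
def seesDeadEnd {W : Type*} (R : W → W → Prop) (x : W) : Prop :=
  ∃ y, R x y ∧ ∀ z, ¬ R y z

section Helpers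
variable {W : Type*} (R : W → W → Prop)

lemma msat_known (S : Set W) (w : W) : MSat R S w MForm.known ↔ w ∈ S := Iff.rfl
lemma msat_neg (S : Set W) (w : W) (φ : MForm) :
    MSat R S w (MForm.neg φ) ↔ ¬ MSat R S w φ := Iff.rfl
lemma msat_conj (S : Set W) (w : W) (φ ψ : MForm) :
    MSat R S w (MForm.conj φ ψ) ↔ MSat R S w φ ∧ MSat R S w ψ := Iff.rfl
lemma msat_dia (S : Set W) (w : W) (φ : MForm) :
    MSat R S w (MForm.dia φ) ↔ ∃ t, R w t ∧ MSat R (S ∪ {w}) t φ := Iff.rfl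
lemma msat_impl (S : Set W) (w : W) (φ ψ : MForm) :
    MSat R S w (MForm.impl φ ψ) ↔ (MSat R S w φ → MSat R S w ψ) := by
  simp [MForm.impl, MSat]
lemma msat_box (S : Set W) (w : W) (φ : MForm) :
    MSat R S w (MForm.box φ) ↔ ∀ t, R w t → MSat R (S ∪ {w}) t φ := by
  simp [MForm.box, MSat]
lemma msat_top (S : Set W) (w : W) : MSat R S w MForm.top ↔ True := by
  simp [MForm.top, MForm.disj, MSat]
lemma msat_sees (S : Set W) (w : W) :
    MSat R S w MForm.sees ↔ seesDeadEnd R w := by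
  simp only [MForm.sees, MForm.box, MForm.bot, MSat, seesDeadEnd]
  constructor
  · rintro ⟨t, ht, h2⟩
    refine ⟨t, ht, fun z hz => ?_⟩
    have := h2 ⟨z, hz, fun hc => (hc.2 hc.1).elim⟩
    exact this.elim
  · rintro ⟨y, hy, h2⟩
    exact ⟨y, hy, fun ⟨x, hx, _⟩ => h2 x hx⟩

end Helpers
/-- If M = (W,R) is a Kripke frame, s ∈ W, and M, ∅, s ⊨ Inf,
then W is infinite. -/
theorem inf_forces_infinite {W : Type*} (R : W → W → Prop) (s : W)
    (h : MSat R ∅ s MForm.infF) : Infinite W := by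
  classical
  simp only [MForm.infF, MForm.aorb, MForm.cmac, msat_conj, msat_box, msat_dia,
    msat_impl, msat_neg, msat_known, msat_top, msat_sees, Set.union_empty,
    Set.empty_union, Set.union_singleton, Set.mem_insert_iff,
    Set.mem_singleton_iff, Set.mem_empty_iff_false, true_implies, or_false] at h
  obtain ⟨h1, h2, h3, h4, h5, h6, h7⟩ := h
  -- s has no self loop
  have hss : ¬ R s s := fun hc => h2 s hc h1
  -- successors of s have no self loops
  have noloop : ∀ t, R s t → ¬ R t t :=
    fun t hst htt => h2 t hst (h3 t hst t htt (Or.inl rfl))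
  -- consequence of conjunct (6)
  have C6 : ∀ t u, R s t → R t u → ¬ seesDeadEnd R u → R s u ∧ R u s := by
    intro t u hst htu hu
    obtain ⟨v, huv, hv, hsv, w, hvw, hw, hwall⟩ := h6 t hst u htu hu
    rcases hv with rfl | rfl | rfl
    · exact absurd hsv hu
    · exact absurd hsv (h2 v hst)
    · rcases hw with rfl | rfl | rfl | rfl
      · exact absurd hvw hss
      · exact ⟨hvw, huv⟩
      · exact absurd (hwall u htu (by tauto)) hu
      · exact absurd hvw hss
  -- consequence of conjunct (7): a "transitivity" step
  have C7 : ∀ t u v, R s t → R t u → ¬ seesDeadEnd R u → R u v →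
      ¬ seesDeadEnd R v → R t v := by
    intro t u v hst htu hu huv hv
    obtain ⟨w, hvw, hw, hsw, hwall⟩ := h7 t hst u htu hu v huv hv
    rcases hw with rfl | rfl | rfl | rfl
    · exact absurd hsw hv
    · exact absurd hsw hu
    · exact absurd hsw (h2 w hst)
    · obtain ⟨q, htq, hq, hqall⟩ := hwall t hst ⟨by tauto, u, htu, by tauto, hu⟩
      rcases hq with rfl | rfl | rfl | rfl | rfl | rfl
      · exact absurd (hqall u htu (by tauto)) hu
      · exact absurd (hqall t hst (by tauto)) (h2 t hst)
      · exact htq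
      · exact absurd (hqall v huv (by tauto)) hv
      · exact absurd (hqall u htu (by tauto)) hu
      · exact absurd (hqall t hst (by tauto)) (h2 t hst)
  -- starting point: some t with R s t and R t s
  have hx0 : ∃ x, R s x ∧ R x s := by
    obtain ⟨t0, hst0, u0, ht0u0, hu0⟩ := h4
    rcases hu0 with rfl | rfl
    · exact absurd (h2 u0 hst0) (fun hc => hc (h3 u0 hst0 u0 ht0u0 (Or.inl rfl)))
    · exact ⟨t0, hst0, ht0u0⟩
  -- step
  have stepP : ∀ p : {x : W // R s x ∧ R x s}, ∃ q : {x : W // R s x ∧ R x s}, R p.1 q.1 := by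
    rintro ⟨x, hsx, hxs⟩
    obtain ⟨u, hxu, -, hu⟩ := h5 x hsx ⟨s, hxs, trivial⟩
    obtain ⟨hsu, hus⟩ := C6 x u hsx hxu hu
    exact ⟨⟨u, hsu, hus⟩, hxu⟩
  choose F hF using stepP
  obtain ⟨x0, hx0'⟩ := hx0
  set seq : ℕ → {x : W // R s x ∧ R x s} := fun n => F^[n] ⟨x0, hx0'⟩ with hseq
  have hchain : ∀ n, R (seq n).1 (seq (n+1)).1 := by
    intro n
    have : seq (n+1) = F (seq n) := Function.iterate_succ_apply' F n _
    rw [this]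
    exact hF (seq n)
  have hRs : ∀ n, R s (seq n).1 := fun n => (seq n).2.1
  have hlt : ∀ i j, i < j → R (seq i).1 (seq j).1 := by
    intro i j hij
    induction j with
    | zero => omega
    | succ j ih =>
      rcases Nat.lt_succ_iff_lt_or_eq.mp hij with hij' | rfl
      · exact C7 (seq i).1 (seq j).1 (seq (j+1)).1 (hRs i) (ih hij')
          (h2 _ (hRs j)) (hchain j) (h2 _ (hRs (j+1)))
      · exact hchain i
  have hinj : Function.Injective (fun n => (seq n).1) := by
    intro i j hij
    simp only at hij
    rcases lt_trichotomy i j with hlt' | heq | hlt'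
    · exact absurd (hij ▸ hlt i j hlt') (noloop _ (hRs j))
    · exact heq
    · exact absurd (hij ▸ hlt j i hlt') (noloop _ (hRs j))
  exact Infinite.of_injective _ hinj
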